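/- Let (φ,ψ) be a c-subsolution (i.e., ψ ≤ T₁φ). Fix 0 ≤ s < t ≤ 1 and τ₁, τ₂ ≥ 0 with s+τ₂ ≤ t-τ₁. Define φ_{s+τ₂} := T_{s+τ₂}φ and ψ_{t-τ₁} := T̂_{1-t+τ₁}ψ. Then the pair (T̂_{τ₂}φ_{s+τ₂}, T_{τ₁}ψ_{t-τ₁}) is a c_{t-s}-subsolution: T_{τ₁}ψ_{t-τ₁}(y) - T̂_{τ₂}φ_{s+τ₂}(x) ≤ c_{t-s}(x,y) for all x,y ∈ M. -/

import Mathlib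

noncomputable section

open scoped Classical

/-- Addition of extended reals with the convention `-∞ + ∞ := +∞`. -/
def laxAdd (a b : EReal) : EReal := if a = ⊥ ∧ b = ⊤ then ⊤ else a + b

/-- The forward Lax–Oleinik operator `T_r u(x) = inf_z (u(z) + c_r(z,x))`
(convention `-∞ + ∞ := +∞`). -/
def laxT {M : Type*} (c : ℝ → M → M → EReal) (r : ℝ) (u : M → EReal) (x : M) : EReal :=
  ⨅ z : M, laxAdd (u z) (c r z x)

/-- The backward Lax–Oleinik operator `T̂_r u(x) = sup_z (u(z) - c_r(x,z))`
(the `EReal` subtraction realizes the convention `∞ - ∞ := -∞`). -/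
def laxThat {M : Type*} (c : ℝ → M → M → EReal) (r : ℝ) (u : M → EReal) (x : M) : EReal :=
  ⨆ z : M, (u z - c r x z)

lemma nonneg_ne_bot {x : EReal} (h : 0 ≤ x) : x ≠ ⊥ :=
  (EReal.bot_lt_zero.trans_le h).ne'

lemma key1' (A B p r : EReal) (q : ℝ) (hp : 0 ≤ p) (hr : 0 ≤ r)
    (h : B - A ≤ p + ((q : EReal) + r)) : B - r ≤ laxAdd A p + (q : EReal) := by
  rcases eq_or_ne r ⊤ with hrt | hrt
  · rw [hrt, EReal.sub_top]; exact bot_le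
  lift r to ℝ using ⟨hrt, nonneg_ne_bot hr⟩
  unfold laxAdd
  split_ifs with hcase
  · rw [EReal.top_add_coe]; exact le_top
  rcases eq_or_ne A ⊥ with hAb | hAb
  · subst hAb
    have hpt : p ≠ ⊤ := fun hp' => hcase ⟨rfl, hp'⟩
    lift p to ℝ using ⟨hpt, nonneg_ne_bot hp⟩
    rw [EReal.bot_add, EReal.bot_add]
    rcases eq_or_ne B ⊥ with hBb | hBb
    · rw [hBb, EReal.bot_sub]
    · exfalso
      rw [EReal.sub_bot hBb] at h
      rw [← EReal.coe_add, ← EReal.coe_add] at h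
      exact EReal.coe_ne_top _ (top_le_iff.mp h)
  rcases eq_or_ne A ⊤ with hAt | hAt
  · rw [hAt, EReal.top_add_of_ne_bot (nonneg_ne_bot hp), EReal.top_add_coe]
    exact le_top
  lift A to ℝ using ⟨hAt, hAb⟩
  rcases eq_or_ne p ⊤ with hpt | hpt
  · rw [hpt, EReal.add_top_of_ne_bot (EReal.coe_ne_bot _), EReal.top_add_coe]
    exact le_top
  lift p to ℝ using ⟨hpt, nonneg_ne_bot hp⟩
  rcases eq_or_ne B ⊥ with hBb | hBb
  · rw [hBb, EReal.bot_sub]; exact bot_le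
  rcases eq_or_ne B ⊤ with hBt | hBt
  · exfalso
    rw [hBt, EReal.top_sub_coe, ← EReal.coe_add, ← EReal.coe_add] at h
    exact EReal.coe_ne_top _ (top_le_iff.mp h)
  lift B to ℝ using ⟨hBt, hBb⟩
  norm_cast at h ⊢
  linarith

lemma key2 (A B q r : EReal) (a : ℝ) (hq : 0 ≤ q) (hr : 0 ≤ r)
    (h : B - A ≤ q) : laxAdd B r - (A - (a : EReal)) ≤ (q + r) + (a : EReal) := by
  unfold laxAdd
  split_ifs with hcase
  · rw [hcase.2, EReal.add_top_of_ne_bot (nonneg_ne_bot hq),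
      EReal.top_add_coe]
    exact le_top
  rcases eq_or_ne B ⊥ with hBb | hBb
  · rw [hBb, EReal.bot_add, EReal.bot_sub]; exact bot_le
  rcases eq_or_ne q ⊤ with hqt | hqt
  · rw [hqt, EReal.top_add_of_ne_bot (nonneg_ne_bot hr), EReal.top_add_coe]
    exact le_top
  lift q to ℝ using ⟨hqt, nonneg_ne_bot hq⟩
  rcases eq_or_ne A ⊥ with hAb | hAb
  · exfalso
    rw [hAb, EReal.sub_bot hBb, top_le_iff] at h
    exact EReal.coe_ne_top _ h
  rcases eq_or_ne A ⊤ with hAt | hAt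
  · rw [hAt, EReal.top_sub_coe, EReal.sub_top]; exact bot_le
  lift A to ℝ using ⟨hAt, hAb⟩
  rcases eq_or_ne r ⊤ with hrt | hrt
  · rw [hrt, EReal.add_top_of_ne_bot hBb, ← EReal.coe_sub, EReal.top_sub_coe,
      EReal.add_top_of_ne_bot (EReal.coe_ne_bot _), EReal.top_add_coe]
  lift r to ℝ using ⟨hrt, nonneg_ne_bot hr⟩
  rcases eq_or_ne B ⊤ with hBt | hBt
  · exfalso
    rw [hBt, EReal.top_sub_coe, top_le_iff] at h
    exact EReal.coe_ne_top _ h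
  lift B to ℝ using ⟨hBt, hBb⟩
  norm_cast at h ⊢
  linarith

/-- Let `(φ,ψ)` be a `c`-subsolution (`ψ(y) - φ(x) ≤ c₁(x,y)` for all
`x,y`, i.e. `ψ ≤ T₁φ`). Fix `0 ≤ s < t ≤ 1` and `τ₁, τ₂ ≥ 0` with `s + τ₂ ≤ t - τ₁`, and
set `φ_{s+τ₂} := T_{s+τ₂}φ` and `ψ_{t-τ₁} := T̂_{1-t+τ₁}ψ`. Then the pair
`(T̂_{τ₂} φ_{s+τ₂}, T_{τ₁} ψ_{t-τ₁})` is a `c_{t-s}`-subsolution. -/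
theorem regularized_pair_subsolution {M : Type*} (c : ℝ → M → M → EReal)
    (hnonneg : ∀ t : ℝ, 0 ≤ t → ∀ x y : M, 0 ≤ c t x y)
    (hsplit : ∀ a b : ℝ, 0 ≤ a → 0 ≤ b → ∀ x z : M,
      c (a + b) x z = ⨅ y : M, (c a x y + c b y z))
    (φ ψ : M → EReal)
    (hsubsol : ∀ x y : M, ψ y - φ x ≤ c 1 x y)
    (s t τ₁ τ₂ : ℝ) (hs : 0 ≤ s) (hst : s < t) (ht : t ≤ 1)
    (hτ₁ : 0 ≤ τ₁) (hτ₂ : 0 ≤ τ₂) (h : s + τ₂ ≤ t - τ₁) :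
    ∀ x y : M,
      laxT c τ₁ (laxThat c (1 - t + τ₁) ψ) y - laxThat c τ₂ (laxT c (s + τ₂) φ) x
        ≤ c (t - s) x y := by
  set σ : ℝ := 1 - t + τ₁ with hσdef
  set ρ : ℝ := s + τ₂ with hρdef
  set m : ℝ := t - s - τ₁ - τ₂ with hmdef
  have hσ : 0 ≤ σ := by simp only [hσdef]; linarith
  have hρ : 0 ≤ ρ := by simp only [hρdef]; linarith
  have hm : 0 ≤ m := by simp only [hmdef]; linarith
  -- Step 1: the intermediate subsolution property
  have claim1 : ∀ w z : M, laxThat c σ ψ z - laxT c ρ φ w ≤ c m w z := by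
    intro w z
    rcases eq_or_ne (c m w z) ⊤ with hq | hq
    · rw [hq]; exact le_top
    obtain ⟨q0, hq0⟩ : ∃ q0 : ℝ, c m w z = (q0 : EReal) := by
      lift c m w z to ℝ using ⟨hq, nonneg_ne_bot (hnonneg m hm w z)⟩ with q0 hq0
      exact ⟨q0, rfl⟩
    rw [hq0]
    refine EReal.sub_le_of_le_add ?_
    refine iSup_le fun b => ?_
    have hchain : ∀ a : M, ψ b - φ a ≤ c ρ a w + ((q0 : EReal) + c σ z b) := by
      intro a
      have e1 : c 1 a b = ⨅ y', c ρ a y' + c (m + σ) y' b := by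
        have h1 : (1 : ℝ) = ρ + (m + σ) := by
          simp only [hρdef, hmdef, hσdef]; ring
        rw [h1]; exact hsplit ρ (m + σ) hρ (by linarith) a b
      have e2 : c (m + σ) w b = ⨅ z', c m w z' + c σ z' b :=
        hsplit m σ hm hσ w b
      have le1 : c 1 a b ≤ c ρ a w + c (m + σ) w b := e1 ▸ iInf_le _ w
      have le2 : c (m + σ) w b ≤ c m w z + c σ z b := e2 ▸ iInf_le _ z
      calc ψ b - φ a ≤ c 1 a b := hsubsol a b
        _ ≤ c ρ a w + c (m + σ) w b := le1
        _ ≤ c ρ a w + (c m w z + c σ z b) := add_le_add_right le2 _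
        _ = c ρ a w + ((q0 : EReal) + c σ z b) := by rw [hq0]
    have h1 : ∀ a : M, (ψ b - c σ z b) - (q0 : EReal) ≤ laxAdd (φ a) (c ρ a w) :=
      fun a => EReal.sub_le_of_le_add
        (key1' (φ a) (ψ b) (c ρ a w) (c σ z b) q0 (hnonneg ρ hρ a w)
          (hnonneg σ hσ z b) (hchain a))
    have h2 : (ψ b - c σ z b) - (q0 : EReal) ≤ laxT c ρ φ w := le_iInf h1
    calc ψ b - c σ z b = (ψ b - c σ z b) - (q0 : EReal) + (q0 : EReal) :=
          EReal.sub_add_cancel.symm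
      _ ≤ laxT c ρ φ w + (q0 : EReal) := add_le_add_left h2 _
      _ = (q0 : EReal) + laxT c ρ φ w := add_comm _ _
  -- Step 2
  intro x y
  have hts : t - s = τ₂ + (m + τ₁) := by simp only [hmdef]; ring
  rw [hts, hsplit τ₂ (m + τ₁) hτ₂ (by linarith) x y]
  refine le_iInf fun w => ?_
  rcases eq_or_ne (c τ₂ x w) ⊤ with ha | ha
  · rw [ha, EReal.top_add_of_ne_bot (nonneg_ne_bot (hnonneg (m + τ₁) (by linarith) w y))]
    exact le_top
  obtain ⟨a0, ha0⟩ : ∃ a0 : ℝ, c τ₂ x w = (a0 : EReal) := by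
    lift c τ₂ x w to ℝ using ⟨ha, nonneg_ne_bot (hnonneg τ₂ hτ₂ x w)⟩ with a0 ha0
    exact ⟨a0, rfl⟩
  rw [ha0]
  have hL : laxT c τ₁ (laxThat c σ ψ) y - laxThat c τ₂ (laxT c ρ φ) x - (a0 : EReal)
      ≤ c (m + τ₁) w y := by
    rw [hsplit m τ₁ hm hτ₁ w y]
    refine le_iInf fun z => ?_
    refine EReal.sub_le_of_le_add ?_
    have hmono : laxT c τ₁ (laxThat c σ ψ) y - laxThat c τ₂ (laxT c ρ φ) x
        ≤ laxAdd (laxThat c σ ψ z) (c τ₁ z y) - (laxT c ρ φ w - (a0 : EReal)) := by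
      refine EReal.sub_le_sub (iInf_le _ z) ?_
      have := le_iSup (fun w' => laxT c ρ φ w' - c τ₂ x w') w
      rwa [ha0] at this
    exact hmono.trans
      (key2 (laxT c ρ φ w) (laxThat c σ ψ z) (c m w z) (c τ₁ z y) a0
        (hnonneg m hm w z) (hnonneg τ₁ hτ₁ z y) (claim1 w z))
  calc laxT c τ₁ (laxThat c σ ψ) y - laxThat c τ₂ (laxT c ρ φ) x
      = laxT c τ₁ (laxThat c σ ψ) y - laxThat c τ₂ (laxT c ρ φ) x - (a0 : EReal)
        + (a0 : EReal) := EReal.sub_add_cancel.symm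
    _ ≤ c (m + τ₁) w y + (a0 : EReal) := add_le_add_left hL _
    _ = (a0 : EReal) + c (m + τ₁) w y := add_comm _ _
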